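/- arXiv:2604.26323 — 2 statements merged into one kernel-verified Lean document; each statement's English description precedes it below -/
import Mathlib

section
/- For every integer n ≥ 2, the sum of 1/z_λ over all partitions λ of n having an odd number of parts equals 1/2. -/
/-- `z_λ = ∏_k m_k(λ)! · k^{m_k(λ)}`, where `m_k` is the multiplicity of `k`. -/
def zPart (m : Multiset ℕ) : ℕ :=
  ∏ k ∈ m.toFinset, Nat.factorial (m.count k) * k ^ (m.count k)

lemma zPart_eq_prod (m : Multiset ℕ) (s : Finset ℕ) (hs : m.toFinset ⊆ s) :
    zPart m = ∏ k ∈ s, Nat.factorial (m.count k) * k ^ (m.count k) := by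
  rw [zPart]
  refine Finset.prod_subset hs ?_
  intro x _ hx
  have : m.count x = 0 := by
    simpa [Multiset.count_eq_zero] using fun h => hx (Multiset.mem_toFinset.2 h)
  simp [this]

lemma zPart_pos (m : Multiset ℕ) (h : ∀ i ∈ m, 0 < i) : 0 < zPart m := by
  refine Finset.prod_pos fun k hk => ?_
  have hk' : 0 < k := h k (Multiset.mem_toFinset.1 hk)
  positivity

lemma zPart_zero : zPart 0 = 1 := by simp [zPart]

lemma zPart_cons (k : ℕ) (m : Multiset ℕ) :
    zPart (k ::ₘ m) = ((m.count k + 1) * k) * zPart m := by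
  classical
  set s : Finset ℕ := insert k m.toFinset with hs
  have hks : k ∈ s := Finset.mem_insert_self _ _
  have h1 : (k ::ₘ m).toFinset ⊆ s := by
    intro x hx
    simpa [hs] using Multiset.mem_toFinset.1 hx
  have h2 : m.toFinset ⊆ s := Finset.subset_insert _ _
  rw [zPart_eq_prod _ s h1, zPart_eq_prod m s h2,
    ← Finset.mul_prod_erase s _ hks, ← Finset.mul_prod_erase s
      (fun j => Nat.factorial (m.count j) * j ^ (m.count j)) hks]
  have hcount : ∀ j ∈ s.erase k,
      Nat.factorial ((k ::ₘ m).count j) * j ^ ((k ::ₘ m).count j)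
        = Nat.factorial (m.count j) * j ^ (m.count j) := by
    intro j hj
    have : j ≠ k := Finset.ne_of_mem_erase hj
    rw [Multiset.count_cons_of_ne this]
  rw [Finset.prod_congr rfl hcount, Multiset.count_cons_self,
    Nat.factorial_succ, pow_succ]
  ring

/-- The finset of multisets that are partitions of `n`. -/
def pms (n : ℕ) : Finset (Multiset ℕ) :=
  (Finset.univ : Finset (Nat.Partition n)).image Nat.Partition.parts

lemma parts_injective (n : ℕ) : Function.Injective (Nat.Partition.parts (n := n)) := by
  intro a b h; cases a; cases b; simpa using h

lemma mem_pms {n : ℕ} {m : Multiset ℕ} :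
    m ∈ pms n ↔ m.sum = n ∧ ∀ i ∈ m, 0 < i := by
  constructor
  · rintro hm
    obtain ⟨p, -, rfl⟩ := Finset.mem_image.1 hm
    exact ⟨p.parts_sum, fun i hi => p.parts_pos hi⟩
  · rintro ⟨h1, h2⟩
    exact Finset.mem_image.2 ⟨⟨m, fun {i} hi => h2 i hi, h1⟩, Finset.mem_univ _, rfl⟩

/-- Weighted partition sum. -/
noncomputable def F (t : ℚ) (n : ℕ) : ℚ :=
  ∑ m ∈ pms n, t ^ (Multiset.card m) / (zPart m : ℚ)

lemma F_zero (t : ℚ) : F t 0 = 1 := by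
  have : pms 0 = {0} := by
    ext m
    simp only [mem_pms, Finset.mem_singleton]
    constructor
    · rintro ⟨h1, h2⟩
      ext a
      simp only [Multiset.count_zero, Multiset.count_eq_zero]
      intro ha
      have := h2 a ha
      have : a ≤ m.sum := Multiset.le_sum_of_mem ha
      omega
    · rintro rfl; simp
  simp [F, this, zPart_zero]

lemma zPart_ne_zero {m : Multiset ℕ} (h : ∀ i ∈ m, 0 < i) : (zPart m : ℚ) ≠ 0 := by
  exact_mod_cast (zPart_pos m h).ne'

set_option maxHeartbeats 1000000 in
lemma F_rec (t : ℚ) (n : ℕ) (hn : 1 ≤ n) :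
    (n : ℚ) * F t n = t * ∑ j ∈ Finset.range n, F t j := by
  classical
  have key : (n : ℚ) * F t n
      = t * ∑ k ∈ Finset.Icc 1 n, ∑ μ ∈ pms (n - k),
          t ^ (Multiset.card μ) / (zPart μ : ℚ) := by
    rw [F, Finset.mul_sum]
    have step1 : ∀ m ∈ pms n,
        (n : ℚ) * (t ^ (Multiset.card m) / (zPart m : ℚ))
          = ∑ k ∈ m.toFinset,
              t * (t ^ (Multiset.card (m.erase k)) / (zPart (m.erase k) : ℚ)) := by
      intro m hm
      obtain ⟨hsum, hpos⟩ := mem_pms.1 hm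
      have hn' : (n : ℚ) = ∑ k ∈ m.toFinset, (m.count k * k : ℚ) := by
        have h := Finset.sum_multiset_count m
        rw [hsum] at h
        have : n = ∑ k ∈ m.toFinset, m.count k * k := by
          simpa [smul_eq_mul, mul_comm] using h
        rw [this]
        push_cast
        ring_nf
      rw [hn', Finset.sum_mul]
      refine Finset.sum_congr rfl fun k hk => ?_
      have hkm : k ∈ m := Multiset.mem_toFinset.1 hk
      have hme : m = k ::ₘ m.erase k := (Multiset.cons_erase hkm).symm
      have hz : zPart m = (m.count k * k) * zPart (m.erase k) := by
        conv_lhs => rw [hme]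
        rw [zPart_cons]
        have : (m.erase k).count k + 1 = m.count k := by
          rw [Multiset.count_erase_self]
          have : 1 ≤ m.count k := Multiset.one_le_count_iff_mem.2 hkm
          omega
        rw [this]
      have hcard : Multiset.card m = Multiset.card (m.erase k) + 1 := by
        conv_lhs => rw [hme]; simp
      have hzne : (zPart (m.erase k) : ℚ) ≠ 0 :=
        zPart_ne_zero fun i hi => hpos i (Multiset.mem_of_mem_erase hi)
      have hck : (0 : ℚ) < (m.count k : ℚ) * k := by
        have h1 : 0 < m.count k := Multiset.count_pos.2 hkm
        have h2 : 0 < k := hpos k hkm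
        positivity
      rw [hcard, hz]
      push_cast
      have hk0 : (k : ℚ) ≠ 0 := by exact_mod_cast (hpos k hkm).ne'
      have hc0 : (m.count k : ℚ) ≠ 0 := by exact_mod_cast (Multiset.count_pos.2 hkm).ne'
      field_simp
      ring
    rw [Finset.sum_congr rfl step1, Finset.mul_sum]
    simp_rw [← Finset.mul_sum]
    congr 1
    rw [Finset.sum_sigma', Finset.sum_sigma']
    refine Finset.sum_bij'
      (fun a _ => (⟨a.2, a.1.erase a.2⟩ : Σ _ : ℕ, Multiset ℕ))
      (fun b _ => (⟨b.1 ::ₘ b.2, b.1⟩ : Σ _ : Multiset ℕ, ℕ))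
      ?_ ?_ ?_ ?_ ?_
    · rintro ⟨m, k⟩ ha
      simp only [Finset.mem_sigma] at ha ⊢
      obtain ⟨hm, hk⟩ := ha
      obtain ⟨hsum, hpos⟩ := mem_pms.1 hm
      have hkm : k ∈ m := Multiset.mem_toFinset.1 hk
      have hk1 : 1 ≤ k := hpos k hkm
      have hkn : k ≤ n := hsum ▸ Multiset.le_sum_of_mem hkm
      refine ⟨Finset.mem_Icc.2 ⟨hk1, hkn⟩, mem_pms.2 ⟨?_, ?_⟩⟩
      · have : k + (m.erase k).sum = m.sum := by
          conv_rhs => rw [← Multiset.cons_erase hkm]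
          simp
        omega
      · exact fun i hi => hpos i (Multiset.mem_of_mem_erase hi)
    · rintro ⟨k, μ⟩ hb
      simp only [Finset.mem_sigma] at hb ⊢
      obtain ⟨hk, hμ⟩ := hb
      obtain ⟨hk1, hkn⟩ := Finset.mem_Icc.1 hk
      obtain ⟨hsum, hpos⟩ := mem_pms.1 hμ
      refine ⟨mem_pms.2 ⟨?_, ?_⟩, ?_⟩
      · simp [hsum]; omega
      · intro i hi
        rcases Multiset.mem_cons.1 hi with rfl | h
        · omega
        · exact hpos i h
      · exact Multiset.mem_toFinset.2 (Multiset.mem_cons_self _ _)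
    · rintro ⟨m, k⟩ ha
      simp only [Finset.mem_sigma] at ha
      have hkm : k ∈ m := Multiset.mem_toFinset.1 ha.2
      simp [Multiset.cons_erase hkm]
    · rintro ⟨k, μ⟩ _
      simp [Multiset.erase_cons_head]
    · rintro ⟨m, k⟩ _
      rfl
  rw [key]
  congr 1
  refine Finset.sum_nbij' (fun k => n - k) (fun j => n - j) ?_ ?_ ?_ ?_ ?_
  · intro k hk
    simp only [Finset.mem_Icc] at hk
    simp only [Finset.mem_range]
    omega
  · intro j hj
    simp only [Finset.mem_range] at hj
    simp only [Finset.mem_Icc]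
    omega
  · intro k hk
    simp only [Finset.mem_Icc] at hk
    show n - (n - k) = k
    omega
  · intro j hj
    simp only [Finset.mem_range] at hj
    show n - (n - j) = j
    omega
  · intro k hk
    simp only [F]
  -- (termwise they are definitionally equal)

lemma F_one : ∀ n, F 1 n = 1 := by
  intro n
  induction n using Nat.strong_induction_on with
  | _ n ih =>
    rcases Nat.eq_zero_or_pos n with rfl | hn
    · exact F_zero 1
    · have h := F_rec 1 n hn
      have hsum : ∑ j ∈ Finset.range n, F 1 j = n := by
        rw [Finset.sum_congr rfl fun j hj => ih j (Finset.mem_range.1 hj)]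
        simp
      rw [hsum, one_mul] at h
      have hn0 : (n : ℚ) ≠ 0 := by exact_mod_cast hn.ne'
      field_simp at h
      exact h

lemma F_neg_one_one : F (-1) 1 = -1 := by
  have h := F_rec (-1) 1 le_rfl
  simp [F_zero] at h
  linarith

lemma F_neg_one : ∀ n, 2 ≤ n → F (-1) n = 0 := by
  intro n
  induction n using Nat.strong_induction_on with
  | _ n ih =>
    intro hn
    have h := F_rec (-1) n (by omega)
    have hsum : ∑ j ∈ Finset.range n, F (-1) j = 0 := by
      have hsplit : ∑ j ∈ Finset.Ico 0 2, F (-1) j + ∑ j ∈ Finset.Ico 2 n, F (-1) j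
          = ∑ j ∈ Finset.Ico 0 n, F (-1) j :=
        Finset.sum_Ico_consecutive _ (by omega) (by omega)
      have h1 : ∑ j ∈ Finset.Ico 0 2, F (-1) j = 0 := by
        rw [show (2 : ℕ) = 0 + 2 by rfl]
        rw [Finset.sum_Ico_eq_sum_range]
        simp [Finset.sum_range_succ, F_zero, F_neg_one_one]
      have h2 : ∑ j ∈ Finset.Ico 2 n, F (-1) j = 0 := by
        refine Finset.sum_eq_zero fun j hj => ?_
        obtain ⟨hj1, hj2⟩ := Finset.mem_Ico.1 hj
        exact ih j hj2 hj1
      rw [Finset.range_eq_Ico, ← hsplit, h1, h2]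
      ring
    rw [hsum, mul_zero] at h
    have hn0 : (n : ℚ) ≠ 0 := by
      have : 0 < n := by omega
      exact_mod_cast this.ne'
    exact (mul_eq_zero.1 h).resolve_left hn0

/-- For `n ≥ 2`, the sum of `1/z_λ` over partitions `λ` of `n` with an odd
number of parts equals `1/2`. -/
theorem sum_inv_zPart_odd_length (n : ℕ) (hn : 2 ≤ n) :
    ∑ lam ∈ Finset.univ.filter (fun lam : Nat.Partition n => Odd lam.parts.card),
      (1 : ℚ) / (zPart lam.parts : ℚ) = 1 / 2 := by
  classical
  have hF : ∀ t : ℚ, F t n = ∑ lam : Nat.Partition n,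
      t ^ (Multiset.card lam.parts) / (zPart lam.parts : ℚ) := by
    intro t
    rw [F, pms, Finset.sum_image (fun a _ b _ h => parts_injective n h)]
  have key : ∑ lam ∈ Finset.univ.filter
        (fun lam : Nat.Partition n => Odd lam.parts.card),
      (1 : ℚ) / (zPart lam.parts : ℚ) = (F 1 n - F (-1) n) / 2 := by
    rw [hF, hF, Finset.sum_filter, ← Finset.sum_sub_distrib, Finset.sum_div]
    refine Finset.sum_congr rfl fun lam _ => ?_
    rcases Nat.even_or_odd (Multiset.card lam.parts) with he | ho
    · rw [if_neg (Nat.not_odd_iff_even.2 he), he.neg_one_pow, one_pow]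
      ring
    · rw [if_pos ho, ho.neg_one_pow, one_pow]
      ring
  rw [key, F_one, F_neg_one n hn]
  norm_num
end

section
/- The Hirota product expansion: for smooth (or formal) functions f, g of variables p = (p_1, p_2, …) and any partition λ, D_{p_λ}(e^f · e^g) = e^{f+g} Σ_{j=1}^{l(λ)} Σ_{R^{(1)}∪⋯∪R^{(j)} = λ} (1/j!) (∏_k m_k(λ)! / ∏_{i=1}^j m_k(R^{(i)})!) ∏_{i=1}^j ∂_{p_{R^{(i)}}}( f + (−1)^{l(R^{(i)})} g ), where the inner sum runs over ordered j-tuples of nonempty partitions R^{(1)},…,R^{(j)} whose multiset union is λ. -/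
open Finset

open scoped Classical in
/-- Partial derivative of `F` along the coordinate `r`. -/
noncomputable def pd {N : ℕ} (r : Fin N) (F : (Fin N → ℝ) → ℝ) : (Fin N → ℝ) → ℝ :=
  fun x => fderiv ℝ F x (Pi.single r 1)

/-- Iterated partial derivative along a list of coordinates. -/
noncomputable def pdList {N : ℕ} (L : List (Fin N)) (F : (Fin N → ℝ) → ℝ) :
    (Fin N → ℝ) → ℝ :=
  L.foldr pd F

/-- The Hirota derivative `D_{p_λ}(F·G)`: the iterated derivative of
`q ↦ F(p+q)G(p−q)` along the parts of `λ`, evaluated at `q = 0`. -/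
noncomputable def hirota {N : ℕ} (lam : Multiset (Fin N)) (F G : (Fin N → ℝ) → ℝ) :
    (Fin N → ℝ) → ℝ :=
  fun p => pdList lam.toList (fun q => F (p + q) * G (p - q)) 0

namespace HirotaProof


variable {N : ℕ}

open scoped Classical in
noncomputable def S (lam : Multiset (Fin N)) (j : ℕ) : Finset (Fin j → Multiset (Fin N)) :=
  (Fintype.piFinset fun _ : Fin j => lam.powerset.toFinset).filter
    (fun R => (∀ i, R i ≠ 0) ∧ ∑ i, R i = lam)

lemma count_finset_sum {j : ℕ} (R : Fin j → Multiset (Fin N)) (k : Fin N) :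
    Multiset.count k (∑ i, R i) = ∑ i, Multiset.count k (R i) := by
  simp only [← Multiset.coe_countAddMonoidHom]
  exact map_sum (Multiset.countAddMonoidHom k) R Finset.univ

lemma card_finset_sum {j : ℕ} (R : Fin j → Multiset (Fin N)) :
    Multiset.card (∑ i, R i) = ∑ i, Multiset.card (R i) := by
  simpa using map_sum (⟨⟨Multiset.card, rfl⟩, Multiset.card_add⟩ : Multiset (Fin N) →+ ℕ)
    R Finset.univ

lemma mem_S {lam : Multiset (Fin N)} {j : ℕ} {R : Fin j → Multiset (Fin N)} :
    R ∈ S lam j ↔ (∀ i, R i ≠ 0) ∧ ∑ i, R i = lam := by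
  classical
  constructor
  · intro h
    have := Finset.mem_filter.mp h
    exact this.2
  · intro h
    refine Finset.mem_filter.mpr ⟨Fintype.mem_piFinset.mpr fun i => ?_, h⟩
    rw [Multiset.mem_toFinset, Multiset.mem_powerset, ← h.2]
    exact Finset.single_le_sum (f := R) (fun t _ => zero_le) (Finset.mem_univ i)

lemma le_card_of_mem_S {lam : Multiset (Fin N)} {j : ℕ} {R : Fin j → Multiset (Fin N)}
    (hR : R ∈ S lam j) : j ≤ Multiset.card lam := by
  obtain ⟨h1, h2⟩ := mem_S.mp hR
  calc j = ∑ _i : Fin j, 1 := by simp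
    _ ≤ ∑ i, Multiset.card (R i) := Finset.sum_le_sum fun i _ => by
        simpa [Nat.one_le_iff_ne_zero, Multiset.card_eq_zero] using h1 i
    _ = Multiset.card lam := by rw [← card_finset_sum, h2]

lemma S_empty_of_lt {lam : Multiset (Fin N)} {j : ℕ} (hj : Multiset.card lam < j) :
    S lam j = ∅ :=
  Finset.eq_empty_of_forall_notMem fun R hR => absurd (le_card_of_mem_S hR) (not_le.mpr hj)

lemma S_zero {lam : Multiset (Fin N)} (h : lam ≠ 0) : S lam 0 = ∅ := by
  refine Finset.eq_empty_of_forall_notMem fun R hR => h ?_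
  have := (mem_S.mp hR).2
  simpa using this.symm

noncomputable def coef (lam : Multiset (Fin N)) {j : ℕ} (R : Fin j → Multiset (Fin N)) : ℝ :=
  ∏ k : Fin N, (((lam.count k).factorial : ℝ) / ∏ i, (((R i).count k).factorial : ℝ))

noncomputable def bsum (lam : Multiset (Fin N)) (Φ : Multiset (Fin N) → ℝ) : ℝ :=
  ∑ j ∈ Finset.range (Multiset.card lam + 1),
    ((Nat.factorial j : ℝ))⁻¹ * ∑ R ∈ S lam j, coef lam R * ∏ i, Φ (R i)

lemma S_zero_zero : S (0 : Multiset (Fin N)) 0 = {fun i => i.elim0} := by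
  refine Finset.eq_singleton_iff_unique_mem.mpr ⟨mem_S.mpr ⟨fun i => i.elim0, by simp⟩, ?_⟩
  intro R _
  funext i
  exact i.elim0

lemma bsum_zero (Φ : Multiset (Fin N) → ℝ) : bsum (0 : Multiset (Fin N)) Φ = 1 := by
  unfold bsum
  simp [S_zero_zero, coef]

lemma prod_factor_mul' {f g : Fin N → ℝ} (r : Fin N) (c d : ℝ)
    (h1 : ∀ k, k ≠ r → f k = g k) (h2 : c * f r = d * g r) :
    c * ∏ k, f k = d * ∏ k, g k := by
  rw [← Finset.prod_erase_mul Finset.univ f (Finset.mem_univ r),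
    ← Finset.prod_erase_mul Finset.univ g (Finset.mem_univ r),
    Finset.prod_congr rfl (fun k hk => h1 k (Finset.ne_of_mem_erase hk))]
  calc c * ((∏ k ∈ Finset.univ.erase r, g k) * f r)
      = (∏ k ∈ Finset.univ.erase r, g k) * (c * f r) := by ring
    _ = (∏ k ∈ Finset.univ.erase r, g k) * (d * g r) := by rw [h2]
    _ = d * ((∏ k ∈ Finset.univ.erase r, g k) * g r) := by ring

lemma coef_insertNth (r : Fin N) (lam : Multiset (Fin N)) {j : ℕ}
    (R : Fin j → Multiset (Fin N)) (i : Fin (j + 1)) :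
    coef (r ::ₘ lam) (Fin.insertNth i {r} R) = ((lam.count r : ℝ) + 1) * coef lam R := by
  unfold coef
  have h := prod_factor_mul'
    (f := fun k => (((r ::ₘ lam).count k).factorial : ℝ) /
      ∏ t, ((((Fin.insertNth i ({r} : Multiset (Fin N)) R :
        Fin (j + 1) → Multiset (Fin N)) t).count k).factorial : ℝ))
    (g := fun k => ((lam.count k).factorial : ℝ) / ∏ t, (((R t).count k).factorial : ℝ))
    r 1 ((lam.count r : ℝ) + 1) ?_ ?_
  · rw [one_mul] at h
    exact h
  · intro k hk
    rw [Multiset.count_cons_of_ne hk]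
    congr 1
    rw [Fin.prod_univ_succAbove
      (fun t => ((((Fin.insertNth i ({r} : Multiset (Fin N)) R :
        Fin (j + 1) → Multiset (Fin N)) t).count k).factorial : ℝ)) i]
    simp [Multiset.count_singleton, if_neg hk]
  · rw [Multiset.count_cons_self,
      Fin.prod_univ_succAbove
      (fun t => ((((Fin.insertNth i ({r} : Multiset (Fin N)) R :
        Fin (j + 1) → Multiset (Fin N)) t).count r).factorial : ℝ)) i]
    simp only [Fin.insertNth_apply_same, Fin.insertNth_apply_succAbove]
    have hs : Multiset.count r ({r} : Multiset (Fin N)) = 1 := by simp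
    rw [hs, Nat.factorial_succ, Nat.factorial_one]
    push_cast
    have hden : (∏ t : Fin j, (((R t).count r).factorial : ℝ)) ≠ 0 :=
      Finset.prod_ne_zero_iff.mpr fun t _ => Nat.cast_ne_zero.mpr (Nat.factorial_ne_zero _)
    field_simp

lemma coef_update (r : Fin N) (lam : Multiset (Fin N)) {j : ℕ}
    (R' : Fin j → Multiset (Fin N)) (i : Fin j) (hri : r ∈ R' i) :
    ((R' i).count r : ℝ) * coef (r ::ₘ lam) R' =
      ((lam.count r : ℝ) + 1) * coef lam (Function.update R' i ((R' i).erase r)) := by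
  unfold coef
  refine prod_factor_mul' r _ _ ?_ ?_
  · intro k hk
    rw [Multiset.count_cons_of_ne hk]
    congr 1
    refine Finset.prod_congr rfl fun t _ => ?_
    rcases eq_or_ne t i with rfl | ht
    · rw [Function.update_self, Multiset.count_erase_of_ne hk]
    · rw [Function.update_of_ne ht]
  · rw [Multiset.count_cons_self]
    obtain ⟨c, hc⟩ : ∃ c, (R' i).count r = c + 1 :=
      ⟨(R' i).count r - 1, (Nat.succ_pred_eq_of_pos (Multiset.count_pos.mpr hri)).symm⟩
    have hupd : ∏ t, ((((Function.update R' i ((R' i).erase r)) t).count r).factorial : ℝ)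
        = (c.factorial : ℝ) * ∏ t ∈ Finset.univ.erase i, (((R' t).count r).factorial : ℝ) := by
      rw [← Finset.mul_prod_erase Finset.univ
        (fun t => ((((Function.update R' i ((R' i).erase r)) t).count r).factorial : ℝ))
        (Finset.mem_univ i)]
      have hi : (((Function.update R' i ((R' i).erase r)) i).count r).factorial = c.factorial := by
        rw [Function.update_self, Multiset.count_erase_self, hc]
        simp
      rw [hi]
      congr 1
      refine Finset.prod_congr rfl fun t ht => ?_
      rw [Function.update_of_ne (Finset.ne_of_mem_erase ht)]
    have horig : ∏ t, (((R' t).count r).factorial : ℝ)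
        = ((c + 1).factorial : ℝ) * ∏ t ∈ Finset.univ.erase i, (((R' t).count r).factorial : ℝ) := by
      rw [← Finset.mul_prod_erase Finset.univ _ (Finset.mem_univ i), hc]
    rw [hupd, horig, hc, Nat.factorial_succ c, Nat.factorial_succ (lam.count r)]
    have h1 : (∏ t ∈ Finset.univ.erase i, (((R' t).count r).factorial : ℝ)) ≠ 0 :=
      Finset.prod_ne_zero_iff.mpr fun t _ => Nat.cast_ne_zero.mpr (Nat.factorial_ne_zero _)
    have h2 : (c.factorial : ℝ) ≠ 0 := Nat.cast_ne_zero.mpr (Nat.factorial_ne_zero _)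
    push_cast
    field_simp


noncomputable def w (r : Fin N) (lam : Multiset (Fin N)) (Φ : Multiset (Fin N) → ℝ) {j : ℕ}
    (R' : Fin j → Multiset (Fin N)) (i : Fin j) : ℝ :=
  (((R' i).count r : ℝ) / ((lam.count r : ℝ) + 1)) * (coef (r ::ₘ lam) R' * ∏ t, Φ (R' t))

lemma hm1 (r : Fin N) (lam : Multiset (Fin N)) : ((lam.count r : ℝ) + 1) ≠ 0 := by positivity

lemma sum_w (r : Fin N) (lam : Multiset (Fin N)) (Φ : Multiset (Fin N) → ℝ) {j : ℕ}
    (R' : Fin j → Multiset (Fin N)) (hR' : R' ∈ S (r ::ₘ lam) j) :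
    coef (r ::ₘ lam) R' * ∏ t, Φ (R' t) = ∑ i : Fin j, w r lam Φ R' i := by
  unfold w
  rw [← Finset.sum_mul, ← Finset.sum_div]
  have hc : (∑ i : Fin j, ((R' i).count r : ℝ)) = (lam.count r : ℝ) + 1 := by
    have h2 := (mem_S.mp hR').2
    have h3 := count_finset_sum R' r
    rw [h2, Multiset.count_cons_self] at h3
    exact_mod_cast h3.symm
  rw [hc, div_self (hm1 r lam), one_mul]

open scoped Classical in
lemma w_split (r : Fin N) (lam : Multiset (Fin N)) (Φ : Multiset (Fin N) → ℝ) {j : ℕ}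
    (R' : Fin j → Multiset (Fin N)) :
    ∑ i : Fin j, w r lam Φ R' i =
      (∑ i ∈ Finset.univ.filter fun i : Fin j => R' i = {r}, w r lam Φ R' i)
        + ∑ i ∈ Finset.univ.filter fun i : Fin j => r ∈ R' i ∧ R' i ≠ {r},
            w r lam Φ R' i := by
  classical
  have hz : ∀ i ∈ (Finset.univ : Finset (Fin j)), w r lam Φ R' i ≠ 0 → r ∈ R' i := by
    intro i _ h
    by_contra hc
    apply h
    unfold w
    rw [Multiset.count_eq_zero.mpr hc]
    simp
  have key : ∀ i : Fin j, w r lam Φ R' i =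
      (if R' i = {r} then w r lam Φ R' i else 0)
        + (if r ∈ R' i ∧ R' i ≠ {r} then w r lam Φ R' i else 0) := by
    intro i
    by_cases h1 : R' i = {r}
    · have hnot : ¬(r ∈ R' i ∧ R' i ≠ {r}) := fun h => h.2 h1
      rw [if_pos h1, if_neg hnot]; ring
    · by_cases h2 : r ∈ R' i
      · rw [if_neg h1, if_pos ⟨h2, h1⟩]; ring
      · rw [if_neg h1, if_neg (fun h => h2 h.1)]
        unfold w
        rw [Multiset.count_eq_zero.mpr h2]
        simp
  rw [Finset.sum_congr rfl fun i _ => key i, Finset.sum_add_distrib,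
    Finset.sum_filter, Finset.sum_filter]

open scoped Classical in
lemma partA (r : Fin N) (lam : Multiset (Fin N)) (Φ : Multiset (Fin N) → ℝ) (j : ℕ) :
    (∑ R' ∈ S (r ::ₘ lam) (j + 1),
        ∑ i ∈ Finset.univ.filter fun i : Fin (j + 1) => R' i = {r}, w r lam Φ R' i)
      = ((j : ℝ) + 1) * (Φ {r} * ∑ R ∈ S lam j, coef lam R * ∏ t, Φ (R t)) := by
  classical
  rw [Finset.sum_sigma']
  have hrhs : ((j : ℝ) + 1) * (Φ {r} * ∑ R ∈ S lam j, coef lam R * ∏ t, Φ (R t))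
      = ∑ x ∈ (Finset.univ : Finset (Fin (j + 1))).sigma (fun _ => S lam j),
          Φ {r} * (coef lam x.2 * ∏ t, Φ (x.2 t)) := by
    rw [Finset.sum_sigma]
    dsimp only
    rw [Finset.sum_const, Finset.card_univ, Fintype.card_fin, nsmul_eq_mul]
    push_cast
    congr 1
    rw [Finset.mul_sum]
  rw [hrhs]
  refine Finset.sum_nbij' (fun a => ⟨a.2, Fin.removeNth a.2 a.1⟩)
    (fun b => ⟨(Fin.insertNth b.1 ({r} : Multiset (Fin N)) b.2 :
      Fin (j + 1) → Multiset (Fin N)), b.1⟩) ?_ ?_ ?_ ?_ ?_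
  · rintro ⟨R', i⟩ ha
    dsimp only
    rw [Finset.mem_sigma] at ha ⊢
    obtain ⟨hR', hi⟩ := ha
    rw [Finset.mem_filter] at hi
    have hsingle : R' i = {r} := hi.2
    obtain ⟨hne, hsum⟩ := mem_S.mp hR'
    refine ⟨Finset.mem_univ i, mem_S.mpr ⟨fun t => hne _, ?_⟩⟩
    have h1 := Fin.sum_univ_succAbove R' i
    rw [hsum, hsingle, Multiset.singleton_add] at h1
    exact ((Multiset.cons_inj_right r).mp h1).symm
  · rintro ⟨i, R⟩ hb
    dsimp only
    rw [Finset.mem_sigma] at hb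
    obtain ⟨-, hR⟩ := hb
    obtain ⟨hne, hsum⟩ := mem_S.mp hR
    rw [Finset.mem_sigma, Finset.mem_filter]
    refine ⟨mem_S.mpr ⟨?_, ?_⟩, Finset.mem_univ i, by simp⟩
    · intro t
      refine Fin.succAboveCases i ?_ ?_ t
      · simp
      · intro t'
        simpa using hne t'
    · rw [Fin.sum_univ_succAbove _ i]
      simp only [Fin.insertNth_apply_same, Fin.insertNth_apply_succAbove]
      rw [hsum, Multiset.singleton_add]
  · rintro ⟨R', i⟩ ha
    dsimp only
    rw [Finset.mem_sigma] at ha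
    obtain ⟨-, hi⟩ := ha
    rw [Finset.mem_filter] at hi
    have hsingle : R' i = {r} := hi.2
    have hins : (Fin.insertNth i ({r} : Multiset (Fin N)) (Fin.removeNth i R') :
        Fin (j + 1) → Multiset (Fin N)) = R' := by
      rw [← hsingle]
      exact Fin.insertNth_self_removeNth i R'
    simp [hins]
  · rintro ⟨i, R⟩ _
    dsimp only
    simp
  · rintro ⟨R', i⟩ ha
    rw [Finset.mem_sigma] at ha
    obtain ⟨hR', hi⟩ := ha
    rw [Finset.mem_filter] at hi
    have hsingle : R' i = {r} := hi.2
    have hins : (Fin.insertNth i ({r} : Multiset (Fin N)) (Fin.removeNth i R') :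
        Fin (j + 1) → Multiset (Fin N)) = R' := by
      rw [← hsingle]
      exact Fin.insertNth_self_removeNth i R'
    dsimp only
    unfold w
    rw [← hins, coef_insertNth, Fin.prod_univ_succAbove
      (fun t => Φ ((Fin.insertNth i ({r} : Multiset (Fin N)) (Fin.removeNth i R') :
        Fin (j + 1) → Multiset (Fin N)) t)) i]
    simp only [Fin.insertNth_apply_same, Fin.insertNth_apply_succAbove,
      Multiset.count_singleton_self]
    have := hm1 r lam
    push_cast
    field_simp
    simp only [Fin.removeNth_insertNth]
    ring


open scoped Classical in
lemma partB (r : Fin N) (lam : Multiset (Fin N)) (Φ : Multiset (Fin N) → ℝ) (j : ℕ) :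
    (∑ R' ∈ S (r ::ₘ lam) j,
        ∑ i ∈ Finset.univ.filter fun i : Fin j => r ∈ R' i ∧ R' i ≠ {r}, w r lam Φ R' i)
      = ∑ R ∈ S lam j, coef lam R *
          ∑ i : Fin j, ∏ t, Φ (Function.update R i (r ::ₘ R i) t) := by
  classical
  rw [Finset.sum_sigma']
  have hrhs : (∑ R ∈ S lam j, coef lam R *
        ∑ i : Fin j, ∏ t, Φ (Function.update R i (r ::ₘ R i) t))
      = ∑ x ∈ (S lam j).sigma (fun _ => (Finset.univ : Finset (Fin j))),
          coef lam x.1 * ∏ t, Φ (Function.update x.1 x.2 (r ::ₘ x.1 x.2) t) := by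
    rw [Finset.sum_sigma]
    dsimp only
    exact Finset.sum_congr rfl fun R _ => Finset.mul_sum _ _ _
  rw [hrhs]
  refine Finset.sum_nbij'
    (fun a => ⟨Function.update a.1 a.2 ((a.1 a.2).erase r), a.2⟩)
    (fun b => ⟨Function.update b.1 b.2 (r ::ₘ b.1 b.2), b.2⟩) ?_ ?_ ?_ ?_ ?_
  · rintro ⟨R', i⟩ ha
    simp only [Finset.mem_sigma, Finset.mem_filter, Finset.mem_univ, true_and, and_true] at ha ⊢
    obtain ⟨hR', hri, hne⟩ := ha
    obtain ⟨hne0, hsum⟩ := mem_S.mp hR'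
    refine mem_S.mpr ⟨?_, ?_⟩
    · intro t
      rcases eq_or_ne t i with rfl | ht
      · rw [Function.update_self]
        intro h0
        apply hne
        rw [← Multiset.cons_erase hri, h0]
        rfl
      · rw [Function.update_of_ne ht]
        exact hne0 t
    · have h1 : r ::ₘ ∑ t, Function.update R' i ((R' i).erase r) t = r ::ₘ lam := by
        rw [Finset.sum_update_of_mem (Finset.mem_univ i),
          Finset.sdiff_singleton_eq_erase, ← Multiset.cons_add,
          Multiset.cons_erase hri, Finset.add_sum_erase _ R' (Finset.mem_univ i), hsum]
      exact (Multiset.cons_inj_right r).mp h1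
  · rintro ⟨R, i⟩ hb
    simp only [Finset.mem_sigma, Finset.mem_filter, Finset.mem_univ, true_and, and_true] at hb ⊢
    obtain ⟨hne0, hsum⟩ := mem_S.mp hb
    refine ⟨mem_S.mpr ⟨?_, ?_⟩, ?_, ?_⟩
    · intro t
      rcases eq_or_ne t i with rfl | ht
      · rw [Function.update_self]
        exact Multiset.cons_ne_zero
      · rw [Function.update_of_ne ht]
        exact hne0 t
    · rw [Finset.sum_update_of_mem (Finset.mem_univ i),
        Finset.sdiff_singleton_eq_erase, Multiset.cons_add,
        Finset.add_sum_erase _ R (Finset.mem_univ i), hsum]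
    · rw [Function.update_self]
      exact Multiset.mem_cons_self r _
    · rw [Function.update_self]
      intro h
      rw [← Multiset.cons_zero r] at h
      exact hne0 i ((Multiset.cons_inj_right r).mp h)
  · rintro ⟨R', i⟩ ha
    simp only [Finset.mem_sigma, Finset.mem_filter, Finset.mem_univ, true_and, and_true] at ha
    obtain ⟨-, hri, -⟩ := ha
    have h2 : Function.update (Function.update R' i ((R' i).erase r)) i
        (r ::ₘ Function.update R' i ((R' i).erase r) i) = R' := by
      rw [Function.update_self, Function.update_idem, Multiset.cons_erase hri,
        Function.update_eq_self]
    simp [h2, Multiset.cons_erase hri]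
  · rintro ⟨R, i⟩ _
    have h2 : Function.update (Function.update R i (r ::ₘ R i)) i
        ((Function.update R i (r ::ₘ R i) i).erase r) = R := by
      rw [Function.update_self, Function.update_idem, Multiset.erase_cons_head,
        Function.update_eq_self]
    simp [h2, Multiset.erase_cons_head]
  · rintro ⟨R', i⟩ ha
    simp only [Finset.mem_sigma, Finset.mem_filter, Finset.mem_univ, true_and, and_true] at ha
    obtain ⟨hR', hri, -⟩ := ha
    dsimp only
    have h2 : Function.update (Function.update R' i ((R' i).erase r)) i
        (r ::ₘ Function.update R' i ((R' i).erase r) i) = R' := by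
      rw [Function.update_self, Function.update_idem, Multiset.cons_erase hri,
        Function.update_eq_self]
    rw [h2]
    unfold w
    have hcu := coef_update r lam R' i hri
    have hme := hm1 r lam
    have hkey : ((R' i).count r : ℝ) / ((lam.count r : ℝ) + 1) * coef (r ::ₘ lam) R'
        = coef lam (Function.update R' i ((R' i).erase r)) := by
      rw [div_mul_eq_mul_div, hcu, mul_comm ((lam.count r : ℝ) + 1), mul_div_assoc,
        div_self hme, mul_one]
    calc ((R' i).count r : ℝ) / ((lam.count r : ℝ) + 1) *
          (coef (r ::ₘ lam) R' * ∏ t, Φ (R' t))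
        = (((R' i).count r : ℝ) / ((lam.count r : ℝ) + 1) * coef (r ::ₘ lam) R') *
            ∏ t, Φ (R' t) := by ring
      _ = _ := by rw [hkey]


open scoped Classical in
lemma bsum_cons (r : Fin N) (lam : Multiset (Fin N)) (Φ : Multiset (Fin N) → ℝ) :
    bsum (r ::ₘ lam) Φ =
      Φ {r} * bsum lam Φ +
        ∑ j ∈ Finset.range (Multiset.card lam + 1), ((Nat.factorial j : ℝ))⁻¹ *
          ∑ R ∈ S lam j, coef lam R *
            ∑ i : Fin j, ∏ t, Φ (Function.update R i (r ::ₘ R i) t) := by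
  classical
  unfold bsum
  rw [Multiset.card_cons]
  have hsplit : ∀ j' ∈ Finset.range (Multiset.card lam + 1 + 1),
      ((Nat.factorial j' : ℝ))⁻¹ *
          ∑ R' ∈ S (r ::ₘ lam) j', coef (r ::ₘ lam) R' * ∏ t, Φ (R' t)
        = ((Nat.factorial j' : ℝ))⁻¹ *
            (∑ R' ∈ S (r ::ₘ lam) j',
              ∑ i ∈ Finset.univ.filter fun i : Fin j' => R' i = {r}, w r lam Φ R' i)
          + ((Nat.factorial j' : ℝ))⁻¹ *
            (∑ R' ∈ S (r ::ₘ lam) j',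
              ∑ i ∈ Finset.univ.filter fun i : Fin j' => r ∈ R' i ∧ R' i ≠ {r},
                w r lam Φ R' i) := by
    intro j' _
    rw [← mul_add, ← Finset.sum_add_distrib]
    congr 1
    refine Finset.sum_congr rfl fun R' hR' => ?_
    rw [sum_w r lam Φ R' hR', w_split r lam Φ R']
  rw [Finset.sum_congr rfl hsplit, Finset.sum_add_distrib]
  congr 1
  · -- A part
    rw [Finset.sum_range_succ', S_zero (Multiset.cons_ne_zero), Finset.sum_empty,
      mul_zero, add_zero, Finset.mul_sum]
    refine Finset.sum_congr rfl fun j _ => ?_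
    rw [partA r lam Φ j]
    have hf : ((Nat.factorial j : ℝ)) ≠ 0 := Nat.cast_ne_zero.mpr (Nat.factorial_ne_zero _)
    have hj : ((j : ℝ) + 1) ≠ 0 := by positivity
    rw [Nat.factorial_succ]
    push_cast
    rw [mul_inv]
    field_simp
  · -- B part
    rw [Finset.sum_congr rfl (fun j' (_ : j' ∈ Finset.range (Multiset.card lam + 1 + 1)) =>
        by rw [partB r lam Φ j']), Finset.sum_range_succ,
      S_empty_of_lt (Nat.lt_succ_self _), Finset.sum_empty, mul_zero, add_zero]



variable {N : ℕ}

lemma le_inf1 : (1 : WithTop ℕ∞) ≤ ((⊤ : ℕ∞) : WithTop ℕ∞) := by exact_mod_cast le_top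
lemma le_inf2 : (2 : WithTop ℕ∞) ≤ ((⊤ : ℕ∞) : WithTop ℕ∞) := by
  rw [← WithTop.coe_ofNat]
  exact WithTop.coe_le_coe.mpr le_top
lemma le_infsucc : ((⊤ : ℕ∞) : WithTop ℕ∞) + 1 ≤ ((⊤ : ℕ∞) : WithTop ℕ∞) := by
  exact_mod_cast le_top

lemma pd_smooth {F : (Fin N → ℝ) → ℝ} (hF : ContDiff ℝ ((⊤ : ℕ∞) : WithTop ℕ∞) F) (r : Fin N) :
    ContDiff ℝ ((⊤ : ℕ∞) : WithTop ℕ∞) (pd r F) :=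
  (hF.fderiv_right le_infsucc).clm_apply contDiff_const

lemma pdList_smooth {F : (Fin N → ℝ) → ℝ} (L : List (Fin N))
    (hF : ContDiff ℝ ((⊤ : ℕ∞) : WithTop ℕ∞) F) :
    ContDiff ℝ ((⊤ : ℕ∞) : WithTop ℕ∞) (pdList L F) := by
  induction L with
  | nil => exact hF
  | cons r L ih => exact pd_smooth ih r

lemma pd_swap {F : (Fin N → ℝ) → ℝ} (hF : ContDiff ℝ ((⊤ : ℕ∞) : WithTop ℕ∞) F) (r s : Fin N) :
    pd r (pd s F) = pd s (pd r F) := by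
  funext x
  have hd2 : Differentiable ℝ (fderiv ℝ F) :=
    (hF.fderiv_right le_infsucc).differentiable (by simp)
  have h : ∀ v w : Fin N → ℝ,
      fderiv ℝ (fun y => fderiv ℝ F y v) x w = fderiv ℝ (fderiv ℝ F) x w v := by
    intro v w
    rw [fderiv_clm_apply (hd2 x) (differentiableAt_const v)]
    simp
  show fderiv ℝ (fun y => fderiv ℝ F y (Pi.single s 1)) x (Pi.single r 1)
    = fderiv ℝ (fun y => fderiv ℝ F y (Pi.single r 1)) x (Pi.single s 1)
  rw [h, h]
  exact (hF.contDiffAt.isSymmSndFDerivAt (by rw [minSmoothness_of_isRCLikeNormedField]; exact le_inf2)) _ _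

lemma pdList_perm {F : (Fin N → ℝ) → ℝ} (hF : ContDiff ℝ ((⊤ : ℕ∞) : WithTop ℕ∞) F)
    {L1 L2 : List (Fin N)} (hp : L1.Perm L2) : pdList L1 F = pdList L2 F := by
  induction hp with
  | nil => rfl
  | cons a h ih =>
    show pd a (pdList _ F) = pd a (pdList _ F)
    rw [ih]
  | swap a b l =>
    show pd b (pd a (pdList l F)) = pd a (pd b (pdList l F))
    exact pd_swap (pdList_smooth l hF) b a
  | trans h1 h2 ih1 ih2 => rw [ih1, ih2]

lemma pd_add {F G : (Fin N → ℝ) → ℝ} (hF : Differentiable ℝ F) (hG : Differentiable ℝ G)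
    (r : Fin N) : pd r (fun x => F x + G x) = fun x => pd r F x + pd r G x := by
  funext x
  unfold pd
  rw [fderiv_fun_add (hF x) (hG x)]
  simp

lemma pd_const_mul {F : (Fin N → ℝ) → ℝ} (c : ℝ) (hF : Differentiable ℝ F) (r : Fin N) :
    pd r (fun x => c * F x) = fun x => c * pd r F x := by
  funext x
  unfold pd
  rw [fderiv_const_mul (hF x) c]
  simp

lemma pd_mul {F G : (Fin N → ℝ) → ℝ} (hF : Differentiable ℝ F) (hG : Differentiable ℝ G)
    (r : Fin N) :
    pd r (fun x => F x * G x) = fun x => pd r F x * G x + F x * pd r G x := by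
  funext x
  unfold pd
  rw [fderiv_fun_mul (hF x) (hG x)]
  simp
  ring

lemma pd_exp {F : (Fin N → ℝ) → ℝ} (hF : Differentiable ℝ F) (r : Fin N) :
    pd r (fun x => Real.exp (F x)) = fun x => Real.exp (F x) * pd r F x := by
  funext x
  unfold pd
  rw [fderiv_exp (hF x)]
  simp

lemma pd_sum {ι : Type*} (s : Finset ι) (F : ι → (Fin N → ℝ) → ℝ)
    (hF : ∀ i ∈ s, Differentiable ℝ (F i)) (r : Fin N) :
    pd r (fun x => ∑ i ∈ s, F i x) = fun x => ∑ i ∈ s, pd r (F i) x := by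
  funext x
  unfold pd
  rw [fderiv_fun_sum (fun i hi => (hF i hi x))]
  simp

lemma diff_prod {ι : Type*} (u : Finset ι) (F : ι → (Fin N → ℝ) → ℝ)
    (hF : ∀ i, Differentiable ℝ (F i)) :
    Differentiable ℝ (fun x => ∏ i ∈ u, F i x) := by
  classical
  intro x
  exact (HasFDerivAt.finset_prod (fun i (_ : i ∈ u) => (hF i x).hasFDerivAt)).differentiableAt

lemma pd_prod {ι : Type*} [DecidableEq ι] (u : Finset ι) (F : ι → (Fin N → ℝ) → ℝ)
    (hF : ∀ i, Differentiable ℝ (F i)) (r : Fin N) (x : Fin N → ℝ) :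
    pd r (fun y => ∏ i ∈ u, F i y) x
      = ∑ i ∈ u, pd r (F i) x * ∏ t ∈ u.erase i, F t x := by
  have h := HasFDerivAt.finset_prod (u := u) (g := F) (g' := fun i => fderiv ℝ (F i) x)
    (fun i _ => (hF i x).hasFDerivAt)
  unfold pd
  rw [h.fderiv]
  simp only [ContinuousLinearMap.coe_sum', Finset.sum_apply, ContinuousLinearMap.coe_smul',
    Pi.smul_apply, smul_eq_mul]
  exact Finset.sum_congr rfl fun i _ => by ring


lemma diff_smooth {F : (Fin N → ℝ) → ℝ} (hF : ContDiff ℝ ((⊤ : ℕ∞) : WithTop ℕ∞) F) :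
    Differentiable ℝ F := hF.differentiable (by simp)

lemma smooth_comp_add {A : (Fin N → ℝ) → ℝ} (hA : ContDiff ℝ ((⊤ : ℕ∞) : WithTop ℕ∞) A)
    (p : Fin N → ℝ) : ContDiff ℝ ((⊤ : ℕ∞) : WithTop ℕ∞) (fun q => A (p + q)) :=
  hA.comp (contDiff_const.add contDiff_id)

lemma smooth_comp_sub {A : (Fin N → ℝ) → ℝ} (hA : ContDiff ℝ ((⊤ : ℕ∞) : WithTop ℕ∞) A)
    (p : Fin N → ℝ) : ContDiff ℝ ((⊤ : ℕ∞) : WithTop ℕ∞) (fun q => A (p - q)) :=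
  hA.comp (contDiff_const.sub contDiff_id)

lemma pd_comp_add {A : (Fin N → ℝ) → ℝ} (hA : Differentiable ℝ A) (p : Fin N → ℝ) (r : Fin N) :
    pd r (fun q => A (p + q)) = fun q => pd r A (p + q) := by
  funext q
  have h1 : HasFDerivAt (fun y : Fin N → ℝ => p + y)
      (ContinuousLinearMap.id ℝ (Fin N → ℝ)) q := (hasFDerivAt_id q).const_add p
  have h' : HasFDerivAt (fun y : Fin N → ℝ => A (p + y))
      ((fderiv ℝ A (p + q)).comp (ContinuousLinearMap.id ℝ (Fin N → ℝ))) q :=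
    ((hA (p + q)).hasFDerivAt).comp q h1
  show fderiv ℝ (fun y : Fin N → ℝ => A (p + y)) q (Pi.single r 1) = _
  rw [h'.fderiv]
  simp [pd]

lemma pd_comp_sub {A : (Fin N → ℝ) → ℝ} (hA : Differentiable ℝ A) (p : Fin N → ℝ) (r : Fin N) :
    pd r (fun q => A (p - q)) = fun q => -pd r A (p - q) := by
  funext q
  have h1 : HasFDerivAt (fun y : Fin N → ℝ => p - y)
      (-(ContinuousLinearMap.id ℝ (Fin N → ℝ))) q := (hasFDerivAt_id q).const_sub p
  have h' : HasFDerivAt (fun y : Fin N → ℝ => A (p - y))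
      ((fderiv ℝ A (p - q)).comp (-(ContinuousLinearMap.id ℝ (Fin N → ℝ)))) q :=
    ((hA (p - q)).hasFDerivAt).comp q h1
  show fderiv ℝ (fun y : Fin N → ℝ => A (p - y)) q (Pi.single r 1) = _
  rw [h'.fderiv]
  simp [pd]

lemma pdList_add_const_mul {A B : (Fin N → ℝ) → ℝ} (c : ℝ)
    (hA : ContDiff ℝ ((⊤ : ℕ∞) : WithTop ℕ∞) A) (hB : ContDiff ℝ ((⊤ : ℕ∞) : WithTop ℕ∞) B)
    (L : List (Fin N)) :
    pdList L (fun x => A x + c * B x) = fun x => pdList L A x + c * pdList L B x := by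
  induction L with
  | nil => rfl
  | cons r L ih =>
    show pd r (pdList L fun x => A x + c * B x) = _
    rw [ih, pd_add (diff_smooth (pdList_smooth L hA))
      ((diff_smooth (pdList_smooth L hB)).const_mul c),
      pd_const_mul c (diff_smooth (pdList_smooth L hB))]
    rfl

lemma pdList_shift {f g : (Fin N → ℝ) → ℝ}
    (hf : ContDiff ℝ ((⊤ : ℕ∞) : WithTop ℕ∞) f) (hg : ContDiff ℝ ((⊤ : ℕ∞) : WithTop ℕ∞) g)
    (p : Fin N → ℝ) (L : List (Fin N)) :
    pdList L (fun q => f (p + q) + g (p - q)) =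
      fun q => pdList L f (p + q) + (-1 : ℝ) ^ L.length * pdList L g (p - q) := by
  induction L with
  | nil =>
    funext q
    simp [pdList]
  | cons r L ih =>
    show pd r (pdList L fun q => f (p + q) + g (p - q)) = _
    rw [ih]
    have hfL := pdList_smooth L hf
    have hgL := pdList_smooth L hg
    rw [pd_add (diff_smooth (smooth_comp_add hfL p))
      ((diff_smooth (smooth_comp_sub hgL p)).const_mul ((-1 : ℝ) ^ L.length)),
      pd_const_mul ((-1 : ℝ) ^ L.length) (diff_smooth (smooth_comp_sub hgL p)),
      pd_comp_add (diff_smooth hfL) p r, pd_comp_sub (diff_smooth hgL) p r]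
    funext q
    show pd r (pdList L f) (p + q) + (-1 : ℝ) ^ L.length * (-pd r (pdList L g) (p - q)) = _
    show _ = pd r (pdList L f) (p + q) + (-1 : ℝ) ^ (L.length + 1) * pd r (pdList L g) (p - q)
    rw [pow_succ]
    ring


lemma pdList_cons_multiset {h : (Fin N → ℝ) → ℝ}
    (hh : ContDiff ℝ ((⊤ : ℕ∞) : WithTop ℕ∞) h) (r : Fin N) (M : Multiset (Fin N)) :
    pd r (pdList M.toList h) = pdList ((r ::ₘ M).toList) h := by
  have hperm : ((r ::ₘ M).toList).Perm (r :: M.toList) := by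
    refine Multiset.coe_eq_coe.mp ?_
    rw [Multiset.coe_toList, ← Multiset.cons_coe, Multiset.coe_toList]
  rw [pdList_perm hh hperm]
  rfl

open scoped Classical in
lemma pdList_exp {h : (Fin N → ℝ) → ℝ}
    (hh : ContDiff ℝ ((⊤ : ℕ∞) : WithTop ℕ∞) h) (L : List (Fin N)) :
    pdList L (fun y => Real.exp (h y)) =
      fun x => Real.exp (h x) * bsum (↑L) (fun R => pdList R.toList h x) := by
  classical
  induction L with
  | nil =>
    funext x
    show Real.exp (h x) = _
    rw [show ((↑([] : List (Fin N))) : Multiset (Fin N)) = 0 from rfl, bsum_zero, mul_one]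
  | cons r L ih =>
    have hG : ∀ M : Multiset (Fin N), ContDiff ℝ ((⊤ : ℕ∞) : WithTop ℕ∞) (pdList M.toList h) :=
      fun M => pdList_smooth _ hh
    have hGd : ∀ M : Multiset (Fin N), Differentiable ℝ (pdList M.toList h) :=
      fun M => diff_smooth (hG M)
    show pd r (pdList L fun y => Real.exp (h y)) = _
    rw [ih]
    -- unfold bsum in both sides
    simp only [bsum]
    -- inner sum function and its derivative
    set n : ℕ := Multiset.card (↑L : Multiset (Fin N)) with hn
    have hdprod : ∀ (j : ℕ) (R : Fin j → Multiset (Fin N)),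
        Differentiable ℝ (fun x => ∏ i, pdList (R i).toList h x) :=
      fun j R => diff_prod _ _ (fun i => hGd (R i))
    have hdinner2 : ∀ j : ℕ, Differentiable ℝ
        (fun x => ∑ R ∈ S (↑L : Multiset (Fin N)) j,
          coef (↑L : Multiset (Fin N)) R * ∏ i, pdList (R i).toList h x) :=
      fun j => Differentiable.fun_sum fun R _ => (hdprod j R).const_mul _
    have hdinner : Differentiable ℝ (fun x => ∑ j ∈ Finset.range (n + 1),
        ((Nat.factorial j : ℝ))⁻¹ * ∑ R ∈ S (↑L : Multiset (Fin N)) j,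
          coef (↑L : Multiset (Fin N)) R * ∏ i, pdList (R i).toList h x) :=
      Differentiable.fun_sum fun j _ => ((hdinner2 j).const_mul _)
    rw [pd_mul (Differentiable.exp (diff_smooth hh)) hdinner r]
    rw [pd_exp (diff_smooth hh) r]
    rw [pd_sum _ _ (fun j _ => (hdinner2 j).const_mul _) r]
    funext x
    dsimp only
    -- compute derivative of each j-term
    have hterm : ∀ j : ℕ,
        pd r (fun x => ((Nat.factorial j : ℝ))⁻¹ * ∑ R ∈ S (↑L : Multiset (Fin N)) j,
            coef (↑L : Multiset (Fin N)) R * ∏ i, pdList (R i).toList h x) x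
          = ((Nat.factorial j : ℝ))⁻¹ * ∑ R ∈ S (↑L : Multiset (Fin N)) j,
              coef (↑L : Multiset (Fin N)) R *
                ∑ i : Fin j, ∏ t, pdList ((Function.update R i (r ::ₘ R i)) t).toList h x := by
      intro j
      rw [pd_const_mul _ (hdinner2 j) r]
      dsimp only
      congr 1
      rw [pd_sum _ _ (fun R _ => (hdprod j R).const_mul _) r]
      refine Finset.sum_congr rfl fun R _ => ?_
      rw [pd_const_mul _ (hdprod j R) r]
      dsimp only
      congr 1
      rw [pd_prod _ _ (fun i => hGd (R i)) r x]
      refine Finset.sum_congr rfl fun i _ => ?_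
      rw [pdList_cons_multiset hh r (R i)]
      rw [← Finset.mul_prod_erase Finset.univ
        (fun t => pdList ((Function.update R i (r ::ₘ R i)) t).toList h x) (Finset.mem_univ i)]
      rw [Function.update_self]
      congr 1
      refine Finset.prod_congr rfl fun t ht => ?_
      rw [Function.update_of_ne (Finset.ne_of_mem_erase ht)]
    rw [Finset.sum_congr rfl fun j _ => hterm j]
    -- now use bsum_cons
    have hcons : (↑(r :: L) : Multiset (Fin N)) = r ::ₘ (↑L : Multiset (Fin N)) := rfl
    have hrs : pd r h = pdList (({r} : Multiset (Fin N)).toList) h := by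
      have hperm : (({r} : Multiset (Fin N)).toList).Perm [r] := by
        refine Multiset.coe_eq_coe.mp ?_
        simp [Multiset.coe_toList]
      rw [pdList_perm hh hperm]
      rfl
    have hb := bsum_cons r (↑L : Multiset (Fin N)) (fun R => pdList R.toList h x)
    rw [show Multiset.card (↑(r :: L) : Multiset (Fin N)) = n + 1 by
      rw [hcons, Multiset.card_cons, hn]]
    calc Real.exp (h x) * pd r h x *
          (∑ j ∈ Finset.range (n + 1), ((Nat.factorial j : ℝ))⁻¹ *
            ∑ R ∈ S (↑L : Multiset (Fin N)) j, coef (↑L : Multiset (Fin N)) R *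
              ∏ i, pdList (R i).toList h x)
        + Real.exp (h x) *
          ∑ j ∈ Finset.range (n + 1), ((Nat.factorial j : ℝ))⁻¹ *
            ∑ R ∈ S (↑L : Multiset (Fin N)) j, coef (↑L : Multiset (Fin N)) R *
              ∑ i : Fin j, ∏ t, pdList ((Function.update R i (r ::ₘ R i)) t).toList h x
        = Real.exp (h x) * bsum (r ::ₘ (↑L : Multiset (Fin N)))
            (fun R => pdList R.toList h x) := by
          rw [hb]
          unfold bsum
          rw [hrs]
          ring
      _ = _ := by
          rw [← hcons]
          unfold bsum
          rw [show Multiset.card (↑(r :: L) : Multiset (Fin N)) = n + 1 by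
            rw [hcons, Multiset.card_cons, hn]]

lemma coef_eq_toFinset {lam : Multiset (Fin N)} {j : ℕ} {R : Fin j → Multiset (Fin N)}
    (hR : R ∈ S lam j) :
    coef lam R = ∏ k ∈ lam.toFinset,
      ((lam.count k).factorial : ℝ) / ∏ i, (((R i).count k).factorial : ℝ) := by
  unfold coef
  refine (Finset.prod_subset (Finset.subset_univ _) ?_).symm
  intro k _ hk
  have h0 : lam.count k = 0 := by
    rw [Multiset.count_eq_zero]
    intro hmem
    exact hk (Multiset.mem_toFinset.mpr hmem)
  have hRi : ∀ i, (R i).count k = 0 := by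
    intro i
    have hle : R i ≤ lam := by
      rw [← (mem_S.mp hR).2]
      exact Finset.single_le_sum (f := R) (fun t _ => zero_le) (Finset.mem_univ i)
    have h1 := Multiset.count_le_of_le k hle
    omega
  rw [h0]
  simp [hRi]

end HirotaProof

open HirotaProof in
open scoped Classical in
/-- The Hirota product expansion
`D_{p_λ}(e^f e^g) = e^{f+g} Σ_j Σ_{R⁽¹⁾∪⋯∪R⁽ʲ⁾=λ} (1/j!) (∏_k m_k(λ)!/∏ᵢ m_k(R⁽ⁱ⁾)!)
∏ᵢ ∂_{p_{R⁽ⁱ⁾}}(f + (−1)^{l(R⁽ⁱ⁾)} g)`,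
the inner sum running over ordered `j`-tuples of nonempty multisets whose union is `λ`. -/
theorem hirota_exp_expansion (N : ℕ) (f g : (Fin N → ℝ) → ℝ)
    (hf : ContDiff ℝ (⊤ : ℕ∞) f) (hg : ContDiff ℝ (⊤ : ℕ∞) g)
    (lam : Multiset (Fin N)) (hlam : lam ≠ 0) :
    hirota lam (fun p => Real.exp (f p)) (fun p => Real.exp (g p)) = fun p =>
      Real.exp (f p + g p) *
        ∑ j ∈ Finset.Icc 1 (Multiset.card lam),
          ∑ R ∈ (Fintype.piFinset fun _ : Fin j => lam.powerset.toFinset).filter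
              (fun R => (∀ i, R i ≠ 0) ∧ ∑ i, R i = lam),
            (Nat.factorial j : ℝ)⁻¹ *
              (∏ k ∈ lam.toFinset,
                (Nat.factorial (lam.count k) : ℝ) /
                  ∏ i, (Nat.factorial ((R i).count k) : ℝ)) *
              ∏ i, pdList (R i).toList
                (fun x => f x + (-1) ^ Multiset.card (R i) * g x) p := by
  classical
  have hf' : ContDiff ℝ ((⊤ : ℕ∞) : WithTop ℕ∞) f := hf.of_le (by simp)
  have hg' : ContDiff ℝ ((⊤ : ℕ∞) : WithTop ℕ∞) g := hg.of_le (by simp)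
  funext p
  have hir : hirota lam (fun p => Real.exp (f p)) (fun p => Real.exp (g p)) p
      = pdList lam.toList (fun q => Real.exp (f (p + q)) * Real.exp (g (p - q))) 0 := rfl
  rw [hir]
  have hfg : (fun q : Fin N → ℝ => Real.exp (f (p + q)) * Real.exp (g (p - q)))
      = fun q => Real.exp ((fun q : Fin N → ℝ => f (p + q) + g (p - q)) q) := by
    funext q
    dsimp only
    rw [← Real.exp_add]
  rw [hfg]
  have hhp : ContDiff ℝ ((⊤ : ℕ∞) : WithTop ℕ∞) (fun q : Fin N → ℝ => f (p + q) + g (p - q)) :=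
    (smooth_comp_add hf' p).add (smooth_comp_sub hg' p)
  rw [pdList_exp hhp lam.toList]
  dsimp only
  rw [Multiset.coe_toList]
  have h0 : f (p + 0) + g (p - 0) = f p + g p := by simp
  rw [h0]
  congr 1
  -- bsum = statement sum
  have heval : ∀ M : Multiset (Fin N),
      pdList M.toList (fun q : Fin N → ℝ => f (p + q) + g (p - q)) 0
        = pdList M.toList (fun x => f x + (-1 : ℝ) ^ Multiset.card M * g x) p := by
    intro M
    rw [pdList_shift hf' hg' p M.toList,
      pdList_add_const_mul ((-1 : ℝ) ^ Multiset.card M) hf' hg' M.toList]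
    simp [Multiset.length_toList]
  unfold bsum
  have hsub : Finset.Icc 1 (Multiset.card lam) ⊆ Finset.range (Multiset.card lam + 1) := by
    intro j hj
    rw [Finset.mem_Icc] at hj
    rw [Finset.mem_range]
    omega
  have hzero : ∀ j ∈ Finset.range (Multiset.card lam + 1), j ∉ Finset.Icc 1 (Multiset.card lam) →
      ((Nat.factorial j : ℝ))⁻¹ * ∑ R ∈ S lam j, coef lam R *
        ∏ i, pdList ((R i).toList) (fun q : Fin N → ℝ => f (p + q) + g (p - q)) 0 = 0 := by
    intro j hj hj2
    have hj0 : j = 0 := by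
      rw [Finset.mem_range] at hj
      rw [Finset.mem_Icc] at hj2
      omega
    subst hj0
    rw [S_zero hlam, Finset.sum_empty, mul_zero]
  calc (∑ j ∈ Finset.range (Multiset.card lam + 1),
        ((Nat.factorial j : ℝ))⁻¹ * ∑ R ∈ S lam j, coef lam R *
          ∏ i, pdList ((R i).toList) (fun q : Fin N → ℝ => f (p + q) + g (p - q)) 0)
      = ∑ j ∈ Finset.Icc 1 (Multiset.card lam),
        ((Nat.factorial j : ℝ))⁻¹ * ∑ R ∈ S lam j, coef lam R *
          ∏ i, pdList ((R i).toList) (fun q : Fin N → ℝ => f (p + q) + g (p - q)) 0 :=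
        (Finset.sum_subset hsub hzero).symm
    _ = _ := by
        refine Finset.sum_congr rfl fun j hj => ?_
        rw [Finset.mul_sum]
        refine Finset.sum_congr rfl fun R hR => ?_
        rw [coef_eq_toFinset hR,
          Finset.prod_congr rfl fun i (_ : i ∈ (Finset.univ : Finset (Fin j))) => heval (R i),
          mul_assoc]
end
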